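/- For all real numbers x and y satisfying d(x,y) = 0, the vector p₀(x,y) lies in the kernel of Ω(x,y), i.e. Ω(x,y) · p₀(x,y) = 0. -/
import Mathlib

open Matrix

/-- The cubic d(x,y). -/
def d (x y : ℝ) : ℝ := x^2*y + 3*x^2 - x*y - 3*y^2 - 3*x - 3*y

/-- The stress matrix Ω(x,y). -/
def Omega (x y : ℝ) : Matrix (Fin 3) (Fin 3) ℝ :=
  !![-2*y - 2, -2*x + y + 1, -2*x - y + 1;
     -2*x + y + 1, -2*y - 2, -y + 1;
     -2*x - y + 1, -y + 1, -2*y - 2]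

/-- The null vector p₀(x,y). -/
def p0 (x y : ℝ) : Fin 3 → ℝ :=
  ![-2*x*y + 3*y^2 - 6*x + 2*y + 3,
    -4*x^2 - 4*x*y + 3*y^2 + 4*x + 10*y + 3,
    4*x^2 - 3*y^2 - 4*x + 3]

theorem p0_in_kernel (x y : ℝ) (h : d x y = 0) :
    (Omega x y).mulVec (p0 x y) = 0 := by
  have hd : x^2*y + 3*x^2 - x*y - 3*y^2 - 3*x - 3*y = 0 := h
  funext i
  fin_cases i <;>
    simp [Omega, p0, mulVec, dotProduct, Fin.sum_univ_succ] <;> nlinarith [hd, sq_nonneg x, sq_nonneg y]
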